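/- arXiv:2401.12763 — 2 statements merged into one kernel-verified Lean document; each statement's English description precedes it below -/
import Mathlib

section
/- Consider the binary two-component channel: states S = (S⁽⁰⁾, S⁽¹⁾) uniform on {0,1}², input X = (A, B) ∈ {0,1}², output Y = (A, B ⊕ S⁽⁽ᴬ⁾⁾), and one-bit assistance alphabet 𝒯 = {0,1}. For any joint distribution of the form P_S · P_{UV} · P_{T|VS} · P_{X|UVT} · W_{Y|XS} (with S independent of (U,V), T a function of (V,S), and X a function of (U,V,T)), it is impossible that both I(U;X|V,T) = 2 and I(U,V;Y) = 2 hold simultaneously. Consequently min{I(UV;Y), I(U;X|VT)} < 2 for every such distribution. -/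
open scoped BigOperators Classical
open Real Finset

noncomputable section

/-- A probability mass function on a finite sample space. -/
structure FinProb (Ω : Type*) [Fintype Ω] where
  p : Ω → ℝ
  nonneg : ∀ ω, 0 ≤ p ω
  sum_one : ∑ ω, p ω = 1

namespace FinProb

variable {Ω : Type*} [Fintype Ω]

/-- Probability of an event. -/
def pr (μ : FinProb Ω) (E : Ω → Prop) : ℝ := ∑ ω, if E ω then μ.p ω else 0

/-- Distribution of a random variable. -/
def dist (μ : FinProb Ω) {α : Type*} [Fintype α] (X : Ω → α) (x : α) : ℝ :=
  μ.pr (fun ω => X ω = x)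

/-- Shannon entropy (in bits) of a finite random variable. -/
def H (μ : FinProb Ω) {α : Type*} [Fintype α] (X : Ω → α) : ℝ :=
  ∑ x, -(μ.dist X x) * Real.logb 2 (μ.dist X x)

/-- Joint entropy H(X,Y). -/
def H2 (μ : FinProb Ω) {α β : Type*} [Fintype α] [Fintype β] (X : Ω → α) (Y : Ω → β) : ℝ :=
  μ.H (fun ω => (X ω, Y ω))

/-- Conditional entropy H(X|Y). -/
def condH (μ : FinProb Ω) {α β : Type*} [Fintype α] [Fintype β] (X : Ω → α) (Y : Ω → β) : ℝ :=
  μ.H2 X Y - μ.H Y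

/-- Mutual information I(X;Y) in bits. -/
def mi (μ : FinProb Ω) {α β : Type*} [Fintype α] [Fintype β] (X : Ω → α) (Y : Ω → β) : ℝ :=
  μ.H X + μ.H Y - μ.H2 X Y

/-- Conditional mutual information I(X;Y|Z) in bits. -/
def cmi (μ : FinProb Ω) {α β γ : Type*} [Fintype α] [Fintype β] [Fintype γ]
    (X : Ω → α) (Y : Ω → β) (Z : Ω → γ) : ℝ :=
  μ.H2 X Z + μ.H2 Y Z - μ.H (fun ω => (X ω, Y ω, Z ω)) - μ.H Z

/-- Conditional probability of event `A` given event `E`. -/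
def cpr (μ : FinProb Ω) (A E : Ω → Prop) : ℝ :=
  μ.pr (fun ω => A ω ∧ E ω) / μ.pr E

/-- Conditional distribution of `X` given the event `E`. -/
def distCond (μ : FinProb Ω) {α : Type*} [Fintype α] (X : Ω → α) (E : Ω → Prop) (x : α) : ℝ :=
  μ.cpr (fun ω => X ω = x) E

/-- Entropy of `X` under the conditional distribution given the event `E`. -/
def entCond (μ : FinProb Ω) {α : Type*} [Fintype α] (X : Ω → α) (E : Ω → Prop) : ℝ :=
  ∑ x, -(μ.distCond X E x) * Real.logb 2 (μ.distCond X E x)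

/-- Conditional entropy H(X | T, E): entropy of `X` given the random variable `T`,
all within the event `E` (averaged over `T` with conditional weights). -/
def condHOn (μ : FinProb Ω) {α β : Type*} [Fintype α] [Fintype β]
    (X : Ω → α) (T : Ω → β) (E : Ω → Prop) : ℝ :=
  ∑ t, μ.cpr (fun ω => T ω = t) E * μ.entCond X (fun ω => T ω = t ∧ E ω)

end FinProb

/-!
Since `H(Y) ≤ 2`, `I(U,V;Y) = 2` forces `H(Y | U,V) = 0`: on the support, `Y` is a function of
`(U,V)`. As `S` is independent of `(U,V)` with full support, for fixed `(u,v)` every state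
occurs, so the output `(A, B ⊕ S⁽ᴬ⁾)` cannot depend on `S`. This is only possible if
`T = S⁽ᴬ⁾ ⊕ d` and `A` is constant, so `A` is determined by the assistance map `h V`, i.e. by `V`.
Hence given `(V,T)` the input `X = (A,B)` takes at most two values, and
`I(U;X|V,T) = H(X|V,T) ≤ 1 < 2`.
-/

theorem neg_mul_logb_two_eq (x : ℝ) : -x * logb 2 x = negMulLog x / log 2 := by
  simp only [negMulLog, logb]; ring

theorem neg_mul_logb_two_nonneg {x : ℝ} (h0 : 0 ≤ x) (h1 : x ≤ 1) : 0 ≤ -x * logb 2 x := by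
  rw [neg_mul_logb_two_eq]; exact div_nonneg (negMulLog_nonneg h0 h1) (log_nonneg one_le_two)

theorem neg_mul_logb_two_mul (x y : ℝ) :
    -(x * y) * logb 2 (x * y) = y * (-x * logb 2 x) + x * (-y * logb 2 y) := by
  simp only [neg_mul_logb_two_eq, negMulLog_mul]; ring

theorem sum_neg_mul_logb_le_logb_card {α : Type*} [Fintype α] {q : α → ℝ} (s : Finset α)
    (h0 : ∀ x, 0 ≤ q x) (h1 : ∑ x, q x = 1) (hs : ∀ x, q x ≠ 0 → x ∈ s) :
    ∑ x, -q x * logb 2 (q x) ≤ logb 2 #s := by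
  have hsub : ∀ {f : ℝ → ℝ}, f 0 = 0 → ∑ x ∈ s, f (q x) = ∑ x, f (q x) := fun hf =>
    sum_subset (subset_univ s) fun x _ hx => by rw [not_not.mp (mt (hs x) hx), hf]
  have hsum : ∑ x ∈ s, q x = 1 := by rw [← h1]; exact hsub (f := id) rfl
  have hcard : (0 : ℝ) < #s := by
    have : s.Nonempty := by
      by_contra hne
      simp [not_nonempty_iff_eq_empty.mp hne] at hsum
    exact_mod_cast this.card_pos
  have hjensen := concaveOn_negMulLog.le_map_sum (t := s) (w := fun _ => (#s : ℝ)⁻¹) (p := q)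
    (fun _ _ => by positivity) (by simp [hcard.ne']) (fun x _ => h0 x)
  have hunif : negMulLog (#s : ℝ)⁻¹ = (#s : ℝ)⁻¹ * log #s := by simp [negMulLog, log_inv]
  simp only [smul_eq_mul, ← mul_sum, hsum, mul_one, hunif] at hjensen
  have hlog : ∑ x ∈ s, negMulLog (q x) ≤ log #s :=
    (mul_le_mul_iff_of_pos_left (inv_pos.2 hcard)).1 hjensen
  calc ∑ x, -q x * logb 2 (q x) = (∑ x ∈ s, negMulLog (q x)) / log 2 := by
        simp only [neg_mul_logb_two_eq, ← sum_div, hsub negMulLog_zero]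
    _ ≤ log #s / log 2 := by gcongr
    _ = logb 2 #s := rfl

theorem eq_of_sum_neg_mul_logb_eq_zero {α : Type*} [Fintype α] {q : α → ℝ}
    (h0 : ∀ x, 0 ≤ q x) (h1 : ∑ x, q x = 1) (hz : ∑ x, -q x * logb 2 (q x) = 0)
    {x y : α} (hx : 0 < q x) (hy : 0 < q y) : x = y := by
  have hle : ∀ z, q z ≤ 1 := fun z => h1 ▸ single_le_sum (fun w _ => h0 w) (mem_univ z)
  have hone : q x = 1 := by
    by_contra hne
    have hterm : -q x * logb 2 (q x) = 0 :=
      (sum_eq_zero_iff_of_nonneg fun z _ => neg_mul_logb_two_nonneg (h0 z) (hle z)).1 hz x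
        (mem_univ x)
    have : 0 < -q x * logb 2 (q x) := mul_pos_of_neg_of_neg (neg_neg_of_pos hx)
      (logb_neg one_lt_two hx (lt_of_le_of_ne (hle x) hne))
    linarith
  by_contra hxy
  have := sum_le_sum_of_subset_of_nonneg (subset_univ {x, y}) fun z _ _ => h0 z
  rw [sum_pair hxy, hone, h1] at this
  linarith

namespace FinProb

variable {Ω α β : Type*} [Fintype Ω] [Fintype α] [Fintype β] (μ : FinProb Ω)

theorem pr_nonneg (E : Ω → Prop) : 0 ≤ μ.pr E :=
  sum_nonneg fun ω _ => by split_ifs <;> simp [μ.nonneg]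

theorem pr_mono {E F : Ω → Prop} (h : ∀ ω, E ω → F ω) : μ.pr E ≤ μ.pr F :=
  sum_le_sum fun ω _ => by
    by_cases hE : E ω
    · simp [hE, h ω hE]
    · split_ifs <;> simp [μ.nonneg]

theorem p_le_pr {E : Ω → Prop} {ω : Ω} (hω : E ω) : μ.p ω ≤ μ.pr E := by
  simpa [hω, pr] using single_le_sum (f := fun ω => if E ω then μ.p ω else 0)
    (fun ω _ => by split_ifs <;> simp [μ.nonneg]) (mem_univ ω)

theorem exists_pos_of_pr_pos {E : Ω → Prop} (h : 0 < μ.pr E) : ∃ ω, 0 < μ.p ω ∧ E ω := by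
  by_contra! hc
  refine h.not_ge (sum_nonpos fun ω _ => ?_)
  split_ifs with hE
  · exact not_lt.1 fun hp => hc ω hp hE
  · rfl

theorem sum_pr_and (X : Ω → α) (E : Ω → Prop) :
    ∑ x, μ.pr (fun ω => X ω = x ∧ E ω) = μ.pr E := by
  unfold pr
  rw [sum_comm]
  refine sum_congr rfl fun ω _ => ?_
  by_cases hE : E ω <;> simp [hE]

theorem sum_dist (X : Ω → α) : ∑ x, μ.dist X x = 1 := by
  simpa [dist, pr, μ.sum_one] using μ.sum_pr_and X fun _ => True

theorem distCond_nonneg (X : Ω → α) (E : Ω → Prop) (x : α) : 0 ≤ μ.distCond X E x :=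
  div_nonneg (μ.pr_nonneg _) (μ.pr_nonneg _)

theorem distCond_le_one (X : Ω → α) (E : Ω → Prop) (x : α) : μ.distCond X E x ≤ 1 :=
  div_le_one_of_le₀ (μ.pr_mono fun _ hω => hω.2) (μ.pr_nonneg E)

theorem sum_distCond (X : Ω → α) {E : Ω → Prop} (hE : 0 < μ.pr E) :
    ∑ x, μ.distCond X E x = 1 := by
  unfold distCond cpr
  rw [← sum_div, sum_pr_and, div_self hE.ne']

theorem entCond_nonneg (X : Ω → α) (E : Ω → Prop) : 0 ≤ μ.entCond X E :=
  sum_nonneg fun x _ =>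
    neg_mul_logb_two_nonneg (μ.distCond_nonneg X E x) (μ.distCond_le_one X E x)

theorem H_le_logb_card (X : Ω → α) : μ.H X ≤ logb 2 (Fintype.card α) := by
  rw [← card_univ]
  exact sum_neg_mul_logb_le_logb_card univ (fun x => μ.pr_nonneg _) (μ.sum_dist X)
    fun x _ => mem_univ x

theorem entCond_le_logb_card (X : Ω → α) {E : Ω → Prop} (hE : 0 < μ.pr E) (s : Finset α)
    (hs : ∀ ω, 0 < μ.p ω → E ω → X ω ∈ s) : μ.entCond X E ≤ logb 2 #s := by
  refine sum_neg_mul_logb_le_logb_card s (μ.distCond_nonneg X E) (μ.sum_distCond X hE)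
    fun x hx => ?_
  have hpos : 0 < μ.pr (fun ω => X ω = x ∧ E ω) :=
    (μ.pr_nonneg _).lt_of_ne' (div_ne_zero_iff.1 hx).1
  obtain ⟨ω, hω, rfl, hEω⟩ := μ.exists_pos_of_pr_pos hpos
  exact hs ω hω hEω

theorem H_comp_of_injective (X : Ω → α) {φ : α → β} (hφ : Function.Injective φ) :
    μ.H (fun ω => φ (X ω)) = μ.H X := by
  refine (Fintype.sum_of_injective φ hφ _ _ (fun b hb => ?_) fun a => ?_).symm
  · have : μ.dist (fun ω => φ (X ω)) b = 0 :=
      sum_eq_zero fun ω _ => if_neg fun h => hb ⟨X ω, h⟩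
    simp [this]
  · simp only [dist, hφ.eq_iff]

theorem dist_prodMk (A : Ω → α) (B : Ω → β) (a : α) (b : β) :
    μ.dist (fun ω => (A ω, B ω)) (a, b) = μ.dist B b * μ.distCond A (fun ω => B ω = b) a := by
  have hpair : μ.dist (fun ω => (A ω, B ω)) (a, b) = μ.pr (fun ω => A ω = a ∧ B ω = b) := by
    simp only [dist, Prod.ext_iff]
  unfold distCond cpr
  rcases (μ.pr_nonneg (fun ω => B ω = b)).eq_or_lt with hb | hb
  · rw [hpair, dist, ← hb, zero_mul]
    exact le_antisymm (hb ▸ μ.pr_mono fun _ h => h.2) (μ.pr_nonneg _)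
  · rw [hpair, dist, mul_div_cancel₀ _ hb.ne']

theorem condH_eq_sum (A : Ω → α) (B : Ω → β) :
    μ.condH A B = ∑ b, μ.dist B b * μ.entCond A (fun ω => B ω = b) := by
  have hfiber : ∀ b, ∑ a, -μ.dist (fun ω => (A ω, B ω)) (a, b) *
      logb 2 (μ.dist (fun ω => (A ω, B ω)) (a, b)) =
      -μ.dist B b * logb 2 (μ.dist B b) + μ.dist B b * μ.entCond A (fun ω => B ω = b) := by
    intro b
    simp only [dist_prodMk, neg_mul_logb_two_mul, sum_add_distrib, ← sum_mul, ← mul_sum]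
    congr 1
    rcases (μ.pr_nonneg (fun ω => B ω = b)).eq_or_lt with hb | hb
    · simp [dist, ← hb]
    · rw [μ.sum_distCond _ hb, one_mul]
  rw [condH, H2, H, Fintype.sum_prod_type, sum_comm, sum_congr rfl fun b _ => hfiber b,
    sum_add_distrib, H]
  ring

theorem condH_nonneg (A : Ω → α) (B : Ω → β) : 0 ≤ μ.condH A B := by
  rw [condH_eq_sum]
  exact sum_nonneg fun b _ => mul_nonneg (μ.pr_nonneg _) (μ.entCond_nonneg A _)

theorem condH_le_logb_of_forall_mem (A : Ω → α) (B : Ω → β) (s : β → Finset α) {k : ℕ}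
    (hk : ∀ b, #(s b) ≤ k) (hs : ∀ ω, 0 < μ.p ω → A ω ∈ s (B ω)) :
    μ.condH A B ≤ logb 2 k := by
  rw [condH_eq_sum]
  calc ∑ b, μ.dist B b * μ.entCond A (fun ω => B ω = b) ≤ ∑ b, μ.dist B b * logb 2 k := by
        refine sum_le_sum fun b _ => ?_
        rcases (μ.pr_nonneg (fun ω => B ω = b)).eq_or_lt with hb | hb
        · simp [dist, ← hb]
        · gcongr
          obtain ⟨ω, hω, rfl⟩ := μ.exists_pos_of_pr_pos hb
          have hcard : 0 < #(s (B ω)) := card_pos.2 ⟨_, hs ω hω⟩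
          calc μ.entCond A _ ≤ logb 2 #(s (B ω)) :=
                μ.entCond_le_logb_card A hb _ fun ω' hω' h => h ▸ hs ω' hω'
            _ ≤ logb 2 k :=
                logb_le_logb_of_le one_lt_two (by exact_mod_cast hcard) (by exact_mod_cast hk _)
    _ = logb 2 k := by rw [← sum_mul, sum_dist, one_mul]

theorem eq_of_condH_eq_zero {A : Ω → α} {B : Ω → β} (h : μ.condH A B = 0) {ω ω' : Ω}
    (hω : 0 < μ.p ω) (hω' : 0 < μ.p ω') (hB : B ω = B ω') : A ω = A ω' := by
  rw [condH_eq_sum] at h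
  set b := B ω
  have hb : 0 < μ.dist B b := hω.trans_le (μ.p_le_pr rfl)
  have hent : μ.entCond A (fun ω => B ω = b) = 0 := by
    have := (sum_eq_zero_iff_of_nonneg fun b _ =>
      mul_nonneg (μ.pr_nonneg _) (μ.entCond_nonneg A _)).1 h b (mem_univ b)
    exact (mul_eq_zero.1 this).resolve_left hb.ne'
  have hpos : ∀ {ω'}, 0 < μ.p ω' → B ω' = b →
      0 < μ.distCond A (fun ω => B ω = b) (A ω') := fun hω' hb' =>
    div_pos (hω'.trans_le (μ.p_le_pr ⟨rfl, hb'⟩)) hb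
  exact eq_of_sum_neg_mul_logb_eq_zero (μ.distCond_nonneg A _) (μ.sum_distCond A hb) hent
    (hpos hω rfl) (hpos hω' hB.symm)

theorem cmi_eq_condH_of_eq_comp {γ : Type*} [Fintype γ] (U : Ω → α) (X : Ω → β) (Z : Ω → γ)
    (g : α → γ → β) (hX : ∀ ω, X ω = g (U ω) (Z ω)) : μ.cmi U X Z = μ.condH X Z := by
  have hUXZ : μ.H (fun ω => (U ω, X ω, Z ω)) = μ.H2 U Z := by
    simp only [hX]
    exact μ.H_comp_of_injective (fun ω => (U ω, Z ω)) (φ := fun p => (p.1, g p.1 p.2, p.2))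
      fun p q h => by simp only [Prod.mk.injEq] at h; exact Prod.ext h.1 h.2.2
  rw [cmi, condH, hUXZ]
  ring

theorem mi_eq_H_sub_condH (W : Ω → α) (Y : Ω → β) : μ.mi W Y = μ.H Y - μ.condH Y W := by
  have hswap : μ.H2 W Y = μ.H2 Y W :=
    μ.H_comp_of_injective (fun ω => (Y ω, W ω)) Prod.swap_injective
  rw [mi, condH, hswap]
  ring

theorem condH_le_logb_card (A : Ω → α) (B : Ω → β) :
    μ.condH A B ≤ logb 2 (Fintype.card α) :=
  μ.condH_le_logb_of_forall_mem A B (fun _ => univ) (fun _ => le_rfl) fun _ _ => mem_univ _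

end FinProb

def channelOutput (x s : Bool × Bool) : Bool × Bool := (x.1, xor x.2 (if x.1 then s.2 else s.1))

/-- An output that does not reveal the state forces `B` to cancel `S⁽ᴬ⁾`, i.e. `T = S⁽ᴬ⁾ ⊕ d`
with `A` constant; that `A` is then read off `g` as whether `T` depends on `S⁽¹⁾`. -/
theorem fst_eq_of_channelOutput_const (g : Bool × Bool → Bool) (e : Bool → Bool × Bool)
    (hc : ∀ s s', channelOutput (e (g s)) s = channelOutput (e (g s')) s') (t : Bool) :
    (e t).1 = (g (false, false) != g (false, true)) := by
  revert g e t; decide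

section Channel

variable {Ω 𝒰 𝒱 : Type*} [Fintype Ω] [Fintype 𝒰] [Fintype 𝒱] (μ : FinProb Ω)
  (S : Ω → Bool × Bool) (U : Ω → 𝒰) (V : Ω → 𝒱)

theorem fst_input_eq_of_condH_output_eq_zero (Y : Ω → Bool × Bool)
    (hS : ∀ s, 0 < μ.dist S s)
    (hSindep : ∀ s u v, μ.pr (fun ω => S ω = s ∧ U ω = u ∧ V ω = v)
        = μ.dist S s * μ.pr (fun ω => U ω = u ∧ V ω = v))
    (h : 𝒱 → Bool × Bool → Bool) (f : 𝒰 → 𝒱 → Bool → Bool × Bool)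
    (hY : ∀ ω, Y ω = channelOutput (f (U ω) (V ω) (h (V ω) (S ω))) (S ω))
    (h0 : μ.condH Y (fun ω => (U ω, V ω)) = 0) {ω : Ω} (hω : 0 < μ.p ω) (t : Bool) :
    (f (U ω) (V ω) t).1 = (h (V ω) (false, false) != h (V ω) (false, true)) := by
  have hfiber : ∀ s, ∃ ω', 0 < μ.p ω' ∧ S ω' = s ∧ U ω' = U ω ∧ V ω' = V ω := fun s =>
    μ.exists_pos_of_pr_pos <| by
      rw [hSindep]; exact mul_pos (hS s) (hω.trans_le (μ.p_le_pr ⟨rfl, rfl⟩))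
  choose ω' hpos hS' hU hV using hfiber
  refine fst_eq_of_channelOutput_const (h (V ω)) (f (U ω) (V ω)) (fun s s' => ?_) t
  have := μ.eq_of_condH_eq_zero h0 (hpos s) (hpos s') (by simp only [hU, hV])
  rwa [hY, hY, hS', hS', hU, hU, hV, hV] at this

theorem condH_input_le_one_of_condH_output_eq_zero (T : Ω → Bool) (X Y : Ω → Bool × Bool)
    (hS : ∀ s, 0 < μ.dist S s)
    (hSindep : ∀ s u v, μ.pr (fun ω => S ω = s ∧ U ω = u ∧ V ω = v)
        = μ.dist S s * μ.pr (fun ω => U ω = u ∧ V ω = v))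
    (h : 𝒱 → Bool × Bool → Bool) (hT : ∀ ω, T ω = h (V ω) (S ω))
    (f : 𝒰 → 𝒱 → Bool → Bool × Bool) (hX : ∀ ω, X ω = f (U ω) (V ω) (T ω))
    (hY : ∀ ω, Y ω = channelOutput (X ω) (S ω))
    (h0 : μ.condH Y (fun ω => (U ω, V ω)) = 0) :
    μ.condH X (fun ω => (V ω, T ω)) ≤ 1 := by
  let a : 𝒱 → Bool := fun v => h v (false, false) != h v (false, true)
  have hfst : ∀ ω, 0 < μ.p ω → (X ω).1 = a (V ω) := fun ω hω => by
    rw [hX]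
    refine fst_input_eq_of_condH_output_eq_zero μ S U V Y hS hSindep h f (fun ω => ?_) h0 hω _
    rw [hY, hX, hT]
  simpa using μ.condH_le_logb_of_forall_mem X (fun ω => (V ω, T ω))
    (fun z => {(a z.1, false), (a z.1, true)}) (fun _ => card_le_two) fun ω hω => by
      rcases hx : X ω with ⟨x₁, _ | _⟩ <;> simp [← hfst ω hω, hx]

end Channel

/-- For the binary two-component channel `Y = (A, B ⊕ S⁽ᴬ⁾)` with state
`S` uniform on `{0,1}²` and one-bit assistance, for any joint distribution of the
admissible form (`S` independent of `(U,V)`, `T` a function of `(V,S)`, `X` a function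
of `(U,V,T)`), it is impossible that `I(U;X|V,T) = 2` and `I(U,V;Y) = 2` both hold;
consequently `min{I(UV;Y), I(U;X|VT)} < 2`. -/
theorem stmt3 {Ω 𝒰 𝒱 : Type} [Fintype Ω] [Fintype 𝒰] [Fintype 𝒱]
    (μ : FinProb Ω) (S : Ω → Bool × Bool) (U : Ω → 𝒰) (V : Ω → 𝒱)
    (T : Ω → Bool) (X : Ω → Bool × Bool) (Y : Ω → Bool × Bool)
    (hS : ∀ s, μ.dist S s = 1 / 4)
    (hSindep : ∀ s u v, μ.pr (fun ω => S ω = s ∧ U ω = u ∧ V ω = v)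
        = μ.dist S s * μ.pr (fun ω => U ω = u ∧ V ω = v))
    (h : 𝒱 → Bool × Bool → Bool) (hT : ∀ ω, T ω = h (V ω) (S ω))
    (f : 𝒰 → 𝒱 → Bool → Bool × Bool) (hX : ∀ ω, X ω = f (U ω) (V ω) (T ω))
    (hY : ∀ ω, Y ω = ((X ω).1, xor (X ω).2 (if (X ω).1 then (S ω).2 else (S ω).1))) :
    ¬(μ.cmi U X (fun ω => (V ω, T ω)) = 2 ∧ μ.mi (fun ω => (U ω, V ω)) Y = 2) ∧
    min (μ.mi (fun ω => (U ω, V ω)) Y) (μ.cmi U X (fun ω => (V ω, T ω))) < 2 := by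
  have hcmi := μ.cmi_eq_condH_of_eq_comp U X (fun ω => (V ω, T ω)) (fun u z => f u z.1 z.2) hX
  have hmi := μ.mi_eq_H_sub_condH (fun ω => (U ω, V ω)) Y
  have hlog : logb 2 (Fintype.card (Bool × Bool)) = 2 := by
    rw [Fintype.card_prod, Fintype.card_bool, Nat.cast_mul, ← pow_two, logb_pow]
    norm_num
  have hcmi_le : μ.cmi U X (fun ω => (V ω, T ω)) ≤ 2 :=
    hcmi ▸ hlog ▸ μ.condH_le_logb_card X _
  have hH_le : μ.H Y ≤ 2 := hlog ▸ μ.H_le_logb_card Y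
  have hcondH_nonneg := μ.condH_nonneg Y fun ω => (U ω, V ω)
  have hnot_both : ¬(μ.cmi U X (fun ω => (V ω, T ω)) = 2 ∧ μ.mi (fun ω => (U ω, V ω)) Y = 2) := by
    rintro ⟨hcmi2, hmi2⟩
    have hY_det : μ.condH Y (fun ω => (U ω, V ω)) = 0 := by linarith
    have hle_one := condH_input_le_one_of_condH_output_eq_zero μ S U V T X Y
      (fun s => by norm_num [hS]) hSindep h hT f hX hY hY_det
    linarith
  refine ⟨hnot_both, ?_⟩
  by_contra! hmin
  rw [le_min_iff] at hmin
  exact hnot_both ⟨by linarith, by linarith⟩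
end
end

section
/- For the binary two-component channel Y = (A, B ⊕ S⁽ᴬ⁾) with S = (S⁽⁰⁾, S⁽¹⁾) uniform on {0,1}², define: U = (A, Ũ) uniform on {0,1}², σ Bernoulli(α) independent of U and S, Ṽ = A if σ=1 and Ṽ = 0 if σ=0, V = (Ṽ, σ), T = S⁽Ṽ⁾, and X = (A, Ũ ⊕ T). Then I(U,V; Y) ≥ (α + 3)/2 bits. -/
open scoped BigOperators Classical
open Real Finset

noncomputable section

/-!
Everything is a function of the sample `W = (A, Ũ, σ, S)`, whose law is explicit, so
`I(U,V; Y) = H(U,V) + H(Y) - H(U,V,Y)` is a finite computation. Here `H(U,V) = 2 + h(α)`,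
`Y` is uniform so `H(Y) = 2`, and `H(U,V,Y) = 2 + h(α) + (1 - α)/2`: given `(U,V)` the output
is determined unless `σ = 0` and `A = 1`, when it carries the fair bit `S⁽⁰⁾ ⊕ S⁽¹⁾`.
Hence `I(U,V; Y) = (α + 3)/2`. Entropies are computed with `negMulLog`, whose
multiplicativity rule `negMulLog_mul` needs no nonvanishing hypothesis, so the degenerate
values of `α` need no separate treatment.
-/

namespace FinProb

variable {Ω : Type*} [Fintype Ω] (μ : FinProb Ω) {β γ δ : Type*} [Fintype β] [Fintype γ]
  [Fintype δ]

def mapEntropy [DecidableEq γ] (q : β → ℝ) (f : β → γ) : ℝ :=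
  (∑ y, negMulLog (∑ x, if f x = y then q x else 0)) / log 2

lemma dist_comp [DecidableEq γ] (X : Ω → β) (f : β → γ) (y : γ) :
    μ.dist (fun ω => f (X ω)) y = ∑ x, if f x = y then μ.dist X x else 0 := by
  simp only [dist, pr]
  rw [← Finset.sum_fiberwise Finset.univ X]
  refine Finset.sum_congr rfl fun x _ => ?_
  rw [Finset.sum_filter]
  split_ifs with h
  · exact Finset.sum_congr rfl fun ω _ => by split_ifs <;> simp_all
  · exact Finset.sum_eq_zero fun ω _ => by split_ifs <;> simp_all

lemma H_eq_sum_negMulLog (X : Ω → β) :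
    μ.H X = (∑ x, negMulLog (μ.dist X x)) / log 2 := by
  simp only [H, logb, negMulLog, Finset.sum_div, mul_div_assoc]

lemma H_comp_eq_mapEntropy [DecidableEq γ] {X : Ω → β} {q : β → ℝ} (hX : μ.dist X = q)
    (f : β → γ) :
    μ.H (fun ω => f (X ω)) = mapEntropy q f := by
  simp only [H_eq_sum_negMulLog, dist_comp, hX, mapEntropy]

lemma mi_comp_eq_mapEntropy [DecidableEq γ] [DecidableEq δ] {X : Ω → β} {q : β → ℝ}
    (hX : μ.dist X = q) (f : β → γ) (g : β → δ) :
    μ.mi (fun ω => f (X ω)) (fun ω => g (X ω))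
      = mapEntropy q f + mapEntropy q g - mapEntropy q (fun x => (f x, g x)) := by
  rw [mi, H2, H_comp_eq_mapEntropy μ hX, H_comp_eq_mapEntropy μ hX,
    H_comp_eq_mapEntropy μ hX (fun x => (f x, g x))]

end FinProb

lemma negMulLog_div_two_pow (x : ℝ) (k : ℕ) :
    negMulLog (x / 2 ^ k) = negMulLog x / 2 ^ k + k * x / 2 ^ k * log 2 := by
  rw [div_eq_mul_inv, negMulLog_mul]
  simp only [negMulLog, log_inv, log_pow]
  ring

-- A sample is `(A, Ũ, σ, S)`; `sourceOf` returns `(U, V) = ((A, Ũ), (Ṽ, σ))`,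
-- `outputOf` returns `Y`.
abbrev Sample := Bool × Bool × Bool × (Bool × Bool)

def jointLaw (α : ℝ) : Sample → ℝ
  | (_, _, b, _) => (if b then α else 1 - α) / 16

def sourceOf : Sample → (Bool × Bool) × (Bool × Bool)
  | (a, u, b, _) => ((a, u), (if b then a else false, b))

def outputOf : Sample → Bool × Bool
  | (a, u, b, s) =>
    (a, xor (xor u (if (if b then a else false) then s.2 else s.1)) (if a then s.2 else s.1))

open FinProb

lemma mapEntropy_sourceOf (α : ℝ) :
    mapEntropy (jointLaw α) sourceOf = (negMulLog α + negMulLog (1 - α)) / log 2 + 2 := by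
  have hsum : ∑ y, negMulLog (∑ w, if sourceOf w = y then jointLaw α w else 0)
      = 4 * negMulLog (α / 2 ^ 2) + 4 * negMulLog ((1 - α) / 2 ^ 2) := by
    simp only [Fintype.sum_prod_type, Fintype.sum_bool, sourceOf, jointLaw]
    norm_num
    ring_nf
  have hlog : log 2 ≠ 0 := by positivity
  rw [mapEntropy, hsum, negMulLog_div_two_pow, negMulLog_div_two_pow]
  field_simp
  ring

lemma mapEntropy_outputOf (α : ℝ) : mapEntropy (jointLaw α) outputOf = 2 := by
  have hsum : ∑ y, negMulLog (∑ w, if outputOf w = y then jointLaw α w else 0)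
      = 4 * negMulLog (1 / 2 ^ 2) := by
    simp only [Fintype.sum_prod_type, Fintype.sum_bool, outputOf, jointLaw]
    norm_num
    ring_nf
  have hlog : log 2 ≠ 0 := by positivity
  rw [mapEntropy, hsum, negMulLog_div_two_pow, negMulLog_one]
  field_simp
  ring

lemma mapEntropy_sourceOf_outputOf (α : ℝ) :
    mapEntropy (jointLaw α) (fun w => (sourceOf w, outputOf w))
      = (negMulLog α + negMulLog (1 - α)) / log 2 + 2 + (1 - α) / 2 := by
  have hsum : ∑ y, negMulLog (∑ w, if (sourceOf w, outputOf w) = y then jointLaw α w else 0)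
      = 4 * negMulLog (α / 2 ^ 2) + 2 * negMulLog ((1 - α) / 2 ^ 2)
        + 4 * negMulLog ((1 - α) / 2 ^ 3) := by
    simp only [Fintype.sum_prod_type, Fintype.sum_bool, sourceOf, outputOf, jointLaw]
    norm_num
    ring_nf
  have hlog : log 2 ≠ 0 := by positivity
  rw [mapEntropy, hsum, negMulLog_div_two_pow, negMulLog_div_two_pow, negMulLog_div_two_pow]
  field_simp
  ring

lemma dist_eq_jointLaw {Ω : Type*} [Fintype Ω] (μ : FinProb Ω) (α : ℝ)
    (A Ut σv : Ω → Bool) (S : Ω → Bool × Bool)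
    (hjoint : ∀ (a u b : Bool) (s : Bool × Bool),
      μ.pr (fun ω => A ω = a ∧ Ut ω = u ∧ σv ω = b ∧ S ω = s)
        = 1 / 4 * (if b then α else 1 - α) * (1 / 4)) :
    μ.dist (fun ω => (A ω, Ut ω, σv ω, S ω)) = jointLaw α := by
  funext ⟨a, u, b, s⟩
  rw [FinProb.dist]
  simp only [Prod.mk.injEq]
  rw [hjoint, jointLaw]
  ring

lemma mi_sourceOf_outputOf {Ω : Type*} [Fintype Ω] (μ : FinProb Ω) (α : ℝ)
    {W : Ω → Sample} (hW : μ.dist W = jointLaw α) :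
    μ.mi (fun ω => sourceOf (W ω)) (fun ω => outputOf (W ω)) = (α + 3) / 2 := by
  rw [μ.mi_comp_eq_mapEntropy hW, mapEntropy_sourceOf, mapEntropy_outputOf,
    mapEntropy_sourceOf_outputOf]
  ring

theorem stmt4_general {Ω : Type} [Fintype Ω] (μ : FinProb Ω) (α : ℝ)
    (A Ut σv : Ω → Bool) (S : Ω → Bool × Bool)
    (hjoint : ∀ (a u b : Bool) (s : Bool × Bool),
      μ.pr (fun ω => A ω = a ∧ Ut ω = u ∧ σv ω = b ∧ S ω = s)
        = 1 / 4 * (if b then α else 1 - α) * (1 / 4)) :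
    let Vt : Ω → Bool := fun ω => if σv ω then A ω else false
    let T : Ω → Bool := fun ω => if Vt ω then (S ω).2 else (S ω).1
    let Y : Ω → Bool × Bool :=
      fun ω => (A ω, xor (xor (Ut ω) (T ω)) (if A ω then (S ω).2 else (S ω).1))
    (α + 3) / 2 ≤ μ.mi (fun ω => ((A ω, Ut ω), (Vt ω, σv ω))) Y :=
  (mi_sourceOf_outputOf μ α (dist_eq_jointLaw μ α A Ut σv S hjoint)).ge

/-- In the explicit construction (`U = (A,Ũ)` uniform, `σ ~ Bernoulli(α)`,
`Ṽ = A` if `σ = 1` else `0`, `V = (Ṽ,σ)`, `T = S⁽Ṽ⁾`, `X = (A, Ũ ⊕ T)`, channel output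
`Y = (A, (Ũ ⊕ T) ⊕ S⁽ᴬ⁾)`), one has `I(U,V; Y) ≥ (α + 3)/2` bits. -/
theorem stmt4 {Ω : Type} [Fintype Ω] (μ : FinProb Ω) (α : ℝ) (hα : α ∈ Set.Icc (0 : ℝ) 1)
    (A Ut σv : Ω → Bool) (S : Ω → Bool × Bool)
    (hjoint : ∀ (a u b : Bool) (s : Bool × Bool),
      μ.pr (fun ω => A ω = a ∧ Ut ω = u ∧ σv ω = b ∧ S ω = s)
        = 1 / 4 * (if b then α else 1 - α) * (1 / 4)) :
    let Vt : Ω → Bool := fun ω => if σv ω then A ω else false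
    let T : Ω → Bool := fun ω => if Vt ω then (S ω).2 else (S ω).1
    let Y : Ω → Bool × Bool :=
      fun ω => (A ω, xor (xor (Ut ω) (T ω)) (if A ω then (S ω).2 else (S ω).1))
    (α + 3) / 2 ≤ μ.mi (fun ω => ((A ω, Ut ω), (Vt ω, σv ω))) Y :=
  stmt4_general μ α A Ut σv S hjoint
end
end
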